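/- Fix a real number ε > 0. For all n large enough, the probability that a uniform random mapping on [n] has height at least ⌈n^{1/2+ε}⌉ is at most (1/2)·exp(−n^ε). -/

import Mathlib

open Classical

/-- A point `x` is cyclic for `f` if some positive iterate of `f` sends `x` to itself. -/
def IsCyclicPt {n : ℕ} (f : Fin n → Fin n) (x : Fin n) : Prop :=
  ∃ i > 0, f^[i] x = x

/-- The set of cyclic points of a mapping `f` on `[n]`. -/
noncomputable def cyclicPts {n : ℕ} (f : Fin n → Fin n) : Finset (Fin n) :=
  Finset.univ.filter (IsCyclicPt f)

/-- The height of a point `x`: the least `i ≥ 0` such that `f^[i] x` is cyclic. -/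
noncomputable def heightOf {n : ℕ} (f : Fin n → Fin n) (x : Fin n) : ℕ :=
  sInf {i : ℕ | IsCyclicPt f (f^[i] x)}

/-- The height of a mapping: the maximal height of a point. -/
noncomputable def height {n : ℕ} (f : Fin n → Fin n) : ℕ :=
  Finset.univ.sup (heightOf f)


/-!
If `height f ≥ m`, some point `x` has `m + 1` distinct iterates `x, f x, …, f^[m] x`, so `f`
maps an injective sequence `a₀, …, aₘ` along itself. There are `n.descFactorial (m + 1)` such
sequences and at most `n ^ (n - m)` mappings following a given one, so the probability is at most
`n · ∏_{i ≤ m} (1 - i / n) ≤ n · exp (-m (m + 1) / (2n))`. For `m ≥ n^(1/2+ε)` the exponent is at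
least `n^(2ε) / 2`, which eventually exceeds `n^ε + log (2n)`.
-/

open Finset

theorem heightOf_le_of_iterate_eq {n : ℕ} (f : Fin n → Fin n) (x : Fin n) {i j : ℕ} (hij : i < j)
    (h : f^[i] x = f^[j] x) : heightOf f x ≤ i :=
  Nat.sInf_le ⟨j - i, by omega, by rw [← Function.iterate_add_apply, Nat.sub_add_cancel hij.le, h]⟩

theorem injective_iterate_of_le_heightOf {n m : ℕ} {f : Fin n → Fin n} {x : Fin n}
    (h : m ≤ heightOf f x) : Function.Injective fun i : Fin (m + 1) => f^[i] x := by
  intro i j hij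
  by_contra hne
  rcases lt_or_gt_of_ne (Fin.val_ne_of_ne hne) with hlt | hlt
  · have := heightOf_le_of_iterate_eq f x hlt hij
    omega
  · have := heightOf_le_of_iterate_eq f x hlt hij.symm
    omega

theorem exists_le_heightOf_of_le_height {n m : ℕ} {f : Fin n → Fin n} (hm : 0 < m)
    (h : m ≤ height f) : ∃ x, m ≤ heightOf f x := by
  obtain ⟨x, -, hx⟩ := (Finset.le_sup_iff hm).mp h
  exact ⟨x, hx⟩

theorem card_filter_forall_apply_eq_le {ι α β : Type*} [Fintype ι] [Fintype α] [Fintype β]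
    [DecidableEq α] [DecidableEq β] {e : ι → α} (he : Function.Injective e) (v : ι → β) :
    #{f : α → β | ∀ i, f (e i) = v i} ≤ Fintype.card β ^ (Fintype.card α - Fintype.card ι) := by
  have hcompl : Fintype.card {y // y ∉ Set.range e} = Fintype.card α - Fintype.card ι := by
    rw [Fintype.card_subtype_compl, Set.card_range_of_injective he]
  rw [← hcompl, ← Fintype.card_fun, ← card_univ]
  refine card_le_card_of_injOn (fun f y => f y) (fun _ _ => mem_univ _) ?_
  intro f hf g hg hfg
  simp only [mem_coe, mem_filter, mem_univ, true_and] at hf hg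
  funext y
  by_cases hy : y ∈ Set.range e
  · obtain ⟨i, rfl⟩ := hy
    rw [hf, hg]
  · exact congrFun hfg ⟨y, hy⟩

theorem card_height_ge_le {n m : ℕ} (hm : 0 < m) :
    #{f : Fin n → Fin n | height f ≥ m} ≤ n.descFactorial (m + 1) * n ^ (n - m) := by
  let mapsAlong (a : Fin (m + 1) → Fin n) : Finset (Fin n → Fin n) :=
    {f | ∀ i : Fin m, f (a i.castSucc) = a i.succ}
  have hcover : ({f : Fin n → Fin n | height f ≥ m} : Finset _) ⊆
      ({a | Function.Injective a} : Finset _).biUnion mapsAlong := by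
    intro f hf
    obtain ⟨x, hx⟩ := exists_le_heightOf_of_le_height hm (mem_filter.mp hf).2
    refine mem_biUnion.mpr ⟨fun i => f^[i] x, ?_, ?_⟩
    · simpa using injective_iterate_of_le_heightOf hx
    · simp [mapsAlong, Function.iterate_succ_apply']
  have hfiber : ∀ a ∈ ({a | Function.Injective a} : Finset (Fin (m + 1) → Fin n)),
      #(mapsAlong a) ≤ n ^ (n - m) := by
    intro a ha
    simpa [mapsAlong] using card_filter_forall_apply_eq_le
      ((mem_filter.mp ha).2.comp (Fin.castSucc_injective m)) (fun i => a i.succ)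
  have hinj : #({a | Function.Injective a} : Finset (Fin (m + 1) → Fin n)) =
      n.descFactorial (m + 1) := by
    rw [← Fintype.card_subtype, Fintype.card_congr (Equiv.subtypeInjectiveEquivEmbedding _ _),
      Fintype.card_embedding_eq, Fintype.card_fin, Fintype.card_fin]
  calc #{f : Fin n → Fin n | height f ≥ m}
      ≤ #(({a | Function.Injective a} : Finset _).biUnion mapsAlong) := card_le_card hcover
    _ ≤ ∑ a ∈ ({a | Function.Injective a} : Finset _), #(mapsAlong a) := card_biUnion_le
    _ ≤ n.descFactorial (m + 1) * n ^ (n - m) := by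
      simpa [hinj] using sum_le_card_nsmul _ _ _ hfiber

theorem descFactorial_le_pow_mul_exp {n : ℕ} (hn : 0 < n) (k : ℕ) :
    (n.descFactorial k : ℝ) ≤ (n : ℝ) ^ k * Real.exp (-((k : ℝ) * (k - 1)) / (2 * n)) := by
  have hsum : ∑ i ∈ range k, (i : ℝ) = k * (k - 1) / 2 := by
    induction k with
    | zero => simp
    | succ k ih => rw [sum_range_succ, ih]; push_cast; ring
  have hfactor : ∀ i ∈ range k, ((n - i : ℕ) : ℝ) ≤ n * Real.exp (-(i / n)) := by
    intro i _
    rcases le_or_gt i n with hi | hi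
    · calc ((n - i : ℕ) : ℝ) = n * (-(i / n) + 1) := by field_simp; push_cast [hi]; ring
        _ ≤ n * Real.exp (-(i / n)) := by gcongr; exact Real.add_one_le_exp _
    · rw [Nat.sub_eq_zero_of_le hi.le, Nat.cast_zero]
      positivity
  calc (n.descFactorial k : ℝ) = ∏ i ∈ range k, ((n - i : ℕ) : ℝ) := by
        rw [Nat.descFactorial_eq_prod_range, Nat.cast_prod]
    _ ≤ ∏ i ∈ range k, (n * Real.exp (-(i / n)) : ℝ) :=
        prod_le_prod (fun _ _ => Nat.cast_nonneg _) hfactor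
    _ = (n : ℝ) ^ k * Real.exp (-((k : ℝ) * (k - 1)) / (2 * n)) := by
        rw [prod_mul_distrib, prod_const, card_range, ← Real.exp_sum, sum_neg_distrib,
          ← sum_div, hsum]
        ring_nf

theorem card_height_ge_div_card_le {n m : ℕ} (hn : 0 < n) (hm : 0 < m) :
    (#{f : Fin n → Fin n | height f ≥ m} : ℝ) / Fintype.card (Fin n → Fin n)
      ≤ n * Real.exp (-((m : ℝ) * (m + 1)) / (2 * n)) := by
  have hn' : (0 : ℝ) < n := Nat.cast_pos.mpr hn
  rw [Fintype.card_fun, Fintype.card_fin, Nat.cast_pow, div_le_iff₀ (by positivity)]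
  calc (#{f : Fin n → Fin n | height f ≥ m} : ℝ)
      ≤ n.descFactorial (m + 1) * n ^ (n - m) := by exact_mod_cast card_height_ge_le hm
    _ ≤ n * Real.exp (-((m : ℝ) * (m + 1)) / (2 * n)) * n ^ n := by
      rcases le_or_gt (m + 1) n with hmn | hmn
      · have hpow : (n : ℝ) ^ (m + 1) * n ^ (n - m) = n * n ^ n := by
          rw [← pow_add, ← pow_succ']; congr 1; omega
        calc (n.descFactorial (m + 1) : ℝ) * n ^ (n - m)
            ≤ (n : ℝ) ^ (m + 1) * Real.exp (-((m + 1 : ℕ) * ((m + 1 : ℕ) - 1 : ℝ)) / (2 * n))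
              * n ^ (n - m) := by gcongr; exact descFactorial_le_pow_mul_exp hn _
          _ = _ := by rw [mul_right_comm, hpow]; push_cast; ring_nf
      · rw [Nat.descFactorial_eq_zero_iff_lt.mpr hmn, Nat.cast_zero, zero_mul]
        positivity

theorem eventually_rpow_add_log_le {ε : ℝ} (hε : 0 < ε) :
    ∀ᶠ n : ℕ in Filter.atTop, (n : ℝ) ^ ε + Real.log (2 * n) ≤ (n : ℝ) ^ (2 * ε) / 2 := by
  set C := 1 + 2 ^ ε / ε
  have hC : 0 < C := by positivity
  filter_upwards [((tendsto_rpow_atTop hε).comp tendsto_natCast_atTop_atTop).eventually_ge_atTop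
    (2 * C)] with n (hn : 2 * C ≤ (n : ℝ) ^ ε)
  have hlog : Real.log (2 * n) ≤ 2 ^ ε / ε * (n : ℝ) ^ ε := by
    calc Real.log (2 * n) ≤ (2 * n : ℝ) ^ ε / ε := Real.log_le_rpow_div (by positivity) hε
      _ = _ := by rw [Real.mul_rpow (by norm_num) (Nat.cast_nonneg n)]; ring
  have hsq : (n : ℝ) ^ (2 * ε) = ((n : ℝ) ^ ε) ^ 2 := by
    rw [mul_comm, Real.rpow_mul (Nat.cast_nonneg n), Real.rpow_two]
  nlinarith

theorem rpow_two_mul_div_two_le_div {x : ℝ} (hx : 0 < x) (ε : ℝ) {m : ℝ}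
    (hm : x ^ ((1 : ℝ) / 2 + ε) ≤ m) : x ^ (2 * ε) / 2 ≤ m * (m + 1) / (2 * x) := by
  have hsq : (x ^ ((1 : ℝ) / 2 + ε)) ^ 2 = x * x ^ (2 * ε) := by
    rw [← Real.rpow_natCast, ← Real.rpow_mul hx.le, Nat.cast_ofNat,
      show ((1 : ℝ) / 2 + ε) * 2 = 1 + 2 * ε by ring, Real.rpow_add hx, Real.rpow_one]
  rw [le_div_iff₀ (by positivity)]
  nlinarith [Real.rpow_nonneg hx.le ((1 : ℝ) / 2 + ε)]

/-- For any `ε > 0`, for all `n` large enough, the probability that a uniform random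
mapping on `[n]` has height at least `⌈n^(1/2+ε)⌉` is at most `(1/2)·exp(-n^ε)`. -/
theorem uniform_mapping_height_bound (ε : ℝ) (hε : 0 < ε) :
    ∃ N : ℕ, ∀ n ≥ N,
      (((Finset.univ : Finset (Fin n → Fin n)).filter
          (fun f => height f ≥ ⌈(n : ℝ) ^ ((1 : ℝ)/2 + ε)⌉₊)).card : ℝ)
        / (Fintype.card (Fin n → Fin n) : ℝ)
        ≤ (1/2) * Real.exp (-(n : ℝ) ^ ε) := by
  obtain ⟨N, hN⟩ := Filter.eventually_atTop.mp
    ((eventually_rpow_add_log_le hε).and (Filter.eventually_gt_atTop 0))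
  refine ⟨N, fun n hn => ?_⟩
  obtain ⟨hlarge, hn⟩ := hN n hn
  have hn' : (0 : ℝ) < n := Nat.cast_pos.mpr hn
  set m := ⌈(n : ℝ) ^ ((1 : ℝ)/2 + ε)⌉₊
  have hm : 0 < m := Nat.ceil_pos.mpr (by positivity)
  have hexponent : (n : ℝ) ^ ε + Real.log (2 * n) ≤ m * (m + 1) / (2 * n) :=
    hlarge.trans (rpow_two_mul_div_two_le_div hn' ε (Nat.le_ceil _))
  calc _ ≤ n * Real.exp (-((m : ℝ) * (m + 1)) / (2 * n)) := card_height_ge_div_card_le hn hm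
    _ ≤ n * Real.exp (-((n : ℝ) ^ ε + Real.log (2 * n))) := by
      rw [neg_div]; gcongr
    _ = (1/2) * Real.exp (-(n : ℝ) ^ ε) := by
      rw [neg_add, Real.exp_add, Real.exp_neg (Real.log _), Real.exp_log (by positivity)]
      field_simp
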